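/- arXiv:2605.06288 — 2 statements merged into one kernel-verified Lean document; each statement's English description precedes it below -/
import Mathlib

section
/- In a finite directed acyclic graph in which |rel(a)| < |rel(b)| holds for every edge (a,b), if a non-root vertex y has a parent c that is adjacent to all other parents of y, then y has at least two parents that are endpoints of unshielded colliders centered at y (i.e., |D_y| ≥ 2). -/
/-!
If the parents of `y` were pairwise adjacent, pick a parent `m` with `|rel(m)|` maximal. Every
other parent `z` is adjacent to `m`, and the edge cannot be `m → z` since that would give
`|rel(m)| < |rel(z)|`; so it is `z → m`. Hence every proper ancestor of `y` is an ancestor of `m`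
and every descendant of `y` is a descendant of `m`, i.e. `rel(y) ⊆ rel(m)`, contradicting
`|rel(m)| < |rel(y)|`. So two parents of `y` are non-adjacent, and both lie in `D_y`.
-/

open Relation

def ancSet {V : Type*} (E : V → V → Prop) (v : V) : Set V :=
  {x | ReflTransGen E x v}

def descSet {V : Type*} (E : V → V → Prop) (v : V) : Set V :=
  {z | ReflTransGen E v z}

def relSet {V : Type*} (E : V → V → Prop) (v : V) : Set V :=
  ⋃ x ∈ ancSet E v, descSet E x

def Adj {V : Type*} (E : V → V → Prop) (a b : V) : Prop := E a b ∨ E b a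

def IsAcyclicRel {V : Type*} (E : V → V → Prop) : Prop :=
  ∀ v, ¬ TransGen E v v

/-- Parents of `y` having another parent of `y` not adjacent to them
(endpoints of unshielded colliders centered at `y`). -/
def DSet {V : Type*} (E : V → V → Prop) (y : V) : Set V :=
  {x | E x y ∧ ∃ z, E z y ∧ z ≠ x ∧ ¬ Adj E x z}

section

variable {V : Type*} {E : V → V → Prop}

theorem Adj.symm {a b : V} (h : Adj E a b) : Adj E b a :=
  Or.symm h

theorem ancSet_subset_of_edge {a b : V} (hab : E a b) : ancSet E a ⊆ ancSet E b :=
  fun _ hx => ReflTransGen.tail hx hab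

theorem relSet_subset_of_parents {y m : V} (hm : E m y)
    (hpa : ∀ p, E p y → ancSet E p ⊆ ancSet E m) : relSet E y ⊆ relSet E m := by
  simp only [relSet, Set.subset_def, Set.mem_iUnion]
  rintro w ⟨x, hxy, hxw⟩
  rcases ReflTransGen.cases_tail hxy with rfl | ⟨p, hxp, hpy⟩
  · exact ⟨m, ReflTransGen.refl, ReflTransGen.head hm hxw⟩
  · exact ⟨x, hpa p hpy hxp, hxw⟩

theorem exists_parents_not_adj [Finite V]
    (hrel : ∀ a b, E a b → (relSet E a).ncard < (relSet E b).ncard) {y c : V} (hc : E c y) :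
    ∃ x z, E x y ∧ E z y ∧ x ≠ z ∧ ¬ Adj E x z := by
  by_contra! hadj
  obtain ⟨m, hm, hmax⟩ := Set.Finite.exists_maximalFor
    (fun p => (relSet E p).ncard) {p | E p y} (Set.toFinite _) ⟨c, hc⟩
  have hpa : ∀ p, E p y → ancSet E p ⊆ ancSet E m := by
    intro p hp
    rcases eq_or_ne p m with rfl | hpm
    · exact subset_rfl
    rcases hadj p m hp hm hpm with hpm' | hmp
    · exact ancSet_subset_of_edge hpm'
    · exact absurd (hmax hp (hrel m p hmp).le) (hrel m p hmp).not_ge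
  have hle : (relSet E y).ncard ≤ (relSet E m).ncard :=
    Set.ncard_le_ncard (relSet_subset_of_parents hm hpa)
  exact (hrel m y hm).not_ge hle

theorem two_le_ncard_DSet_of_not_adj [Finite V] {y x z : V} (hx : E x y) (hz : E z y)
    (hxz : x ≠ z) (hnadj : ¬ Adj E x z) : 2 ≤ (DSet E y).ncard :=
  (Set.one_lt_ncard (Set.toFinite _)).mpr
    ⟨x, ⟨hx, z, hz, hxz.symm, hnadj⟩, z, ⟨hz, x, hx, hxz, fun h => hnadj h.symm⟩, hxz⟩

end

theorem DSet_ncard_ge_two_general {V : Type*} [Fintype V] (E : V → V → Prop)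
    (hrel : ∀ a b, E a b → (relSet E a).ncard < (relSet E b).ncard)
    (y c : V) (hc : E c y) :
    2 ≤ (DSet E y).ncard := by
  obtain ⟨x, z, hx, hz, hxz, hnadj⟩ := exists_parents_not_adj hrel hc
  exact two_le_ncard_DSet_of_not_adj hx hz hxz hnadj

/-- If relatives strictly increase along every edge and a non-root `y` has a
parent `c` adjacent to all other parents of `y`, then `|D_y| ≥ 2`. -/
theorem DSet_ncard_ge_two {V : Type*} [Fintype V] (E : V → V → Prop)
    (hacyc : IsAcyclicRel E)
    (hrel : ∀ a b, E a b → (relSet E a).ncard < (relSet E b).ncard)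
    (y c : V) (hc : E c y) (hcadj : ∀ z, E z y → z ≠ c → Adj E c z) :
    2 ≤ (DSet E y).ncard :=
  DSet_ncard_ge_two_general E hrel y c hc
end

section
/- Let G_S be a directed graph with self-loops at all vertices in which every weakly connected component is strongly connected, and let G_T be its time-unrolled DAG over T steps. Then the number of edges ((i,t),(j,t+1)) of G_T such that nodes (i,t) and (j,t+1) have different root sets is at most p·|E_S|, where p = |V_S|; consequently the fraction of such edges among all (T-1)·|E_S| edges tends to 0 as T → ∞. -/
open Relation Filter

/-- Edge relation of the time-unrolled DAG over `T` steps of a summary graph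
with (finite) edge set `ES`. -/
def unrolled {V : Type*} [DecidableEq V] (ES : Finset (V × V)) (T : ℕ)
    (a b : V × ℕ) : Prop :=
  (a.1, b.1) ∈ ES ∧ b.2 = a.2 + 1 ∧ 1 ≤ a.2 ∧ b.2 ≤ T

def rootsSet {V : Type*} (E : V → V → Prop) (v : V) : Set V :=
  {r | ReflTransGen E r v ∧ {q | ReflTransGen E q r} = {r}}

/-- Edges `((i,t),(j,t+1))` of the unrolled DAG whose endpoints have different
root sets, encoded as pairs of a summary edge and a time index. -/
def badEdges {V : Type*} [DecidableEq V] (ES : Finset (V × V)) (T : ℕ) :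
    Set ((V × V) × ℕ) :=
  {x | x.1 ∈ ES ∧ 1 ≤ x.2 ∧ x.2 ≤ T - 1 ∧
    rootsSet (unrolled ES T) (x.1.1, x.2) ≠ rootsSet (unrolled ES T) (x.1.2, x.2 + 1)}

namespace BadEdgesAux

variable {V : Type*} [DecidableEq V] (ES : Finset (V × V))

/-- `W n a b`: there is a walk of length `n` from `a` to `b` in `ES`. -/
def W : ℕ → V → V → Prop
  | 0, a, b => a = b
  | n+1, a, b => ∃ c, (a, c) ∈ ES ∧ W n c b

variable {ES}

lemma W_succ_self (hself : ∀ v : V, (v, v) ∈ ES) {n : ℕ} {a b : V}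
    (h : W ES n a b) : W ES (n+1) a b := by
  induction n generalizing a with
  | zero => exact ⟨a, hself a, h⟩
  | succ n ih => obtain ⟨c, hc, hw⟩ := h; exact ⟨c, hc, ih hw⟩

lemma W_snoc {n : ℕ} {a b c : V} (h : W ES n a b) (hbc : (b, c) ∈ ES) :
    W ES (n+1) a c := by
  induction n generalizing a with
  | zero => obtain rfl : a = b := h; exact ⟨c, hbc, rfl⟩
  | succ n ih => obtain ⟨d, hd, hw⟩ := h; exact ⟨d, hd, ih hw⟩

lemma W_rtg {n : ℕ} {a b : V} (h : W ES n a b) :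
    ReflTransGen (fun x y => (x, y) ∈ ES) a b := by
  induction n generalizing a with
  | zero => obtain rfl : a = b := h; exact ReflTransGen.refl
  | succ n ih => obtain ⟨c, hc, hw⟩ := h; exact ReflTransGen.head hc (ih hw)

lemma rtg_W {a b : V} (h : ReflTransGen (fun x y => (x, y) ∈ ES) a b) :
    ∃ n, W ES n a b := by
  induction h with
  | refl => exact ⟨0, rfl⟩
  | tail _ hbc ih => obtain ⟨n, hn⟩ := ih; exact ⟨n+1, W_snoc hn hbc⟩

variable (ES) in
/-- vertices that reach `i` by a walk of length exactly `n`. -/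
def Nf (n : ℕ) (i : V) : Set V := {r | W ES n r i}

variable (ES) in
/-- ancestors of `i`. -/
def anc (i : V) : Set V := {r | ReflTransGen (fun x y => (x, y) ∈ ES) r i}

lemma Nf_succ (n : ℕ) (i : V) :
    Nf ES (n+1) i = {r | ∃ c, (r, c) ∈ ES ∧ c ∈ Nf ES n i} := rfl

lemma Nf_mono (hself : ∀ v : V, (v, v) ∈ ES) {n m : ℕ} (h : n ≤ m) (i : V) :
    Nf ES n i ⊆ Nf ES m i := by
  induction m with
  | zero => obtain rfl : n = 0 := Nat.le_zero.mp h; exact subset_rfl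
  | succ m ih =>
    rcases Nat.lt_or_ge n (m+1) with h1 | h1
    · exact fun r hr => W_succ_self hself (ih (by omega) hr)
    · obtain rfl : n = m + 1 := by omega
      exact subset_rfl

lemma Nf_subset_anc (n : ℕ) (i : V) : Nf ES n i ⊆ anc ES i :=
  fun _ hr => W_rtg hr

lemma Nf_stable {n : ℕ} {i : V} (h : Nf ES n i = Nf ES (n+1) i) :
    ∀ m, n ≤ m → Nf ES m i = Nf ES n i := by
  intro m hm
  induction m with
  | zero => obtain rfl : n = 0 := Nat.le_zero.mp hm; rfl
  | succ m ih =>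
    rcases Nat.lt_or_ge n (m+1) with h1 | h1
    · have hmn : Nf ES m i = Nf ES n i := ih (by omega)
      calc Nf ES (m+1) i = {r | ∃ c, (r, c) ∈ ES ∧ c ∈ Nf ES n i} := by
            rw [Nf_succ, hmn]
        _ = Nf ES n i := by rw [← Nf_succ, ← h]
    · obtain rfl : n = m + 1 := by omega
      rfl

section Fin
variable [Fintype V]

lemma Nf_card_or (hself : ∀ v : V, (v, v) ∈ ES) (i : V) :
    ∀ n : ℕ, n + 1 ≤ (Nf ES n i).ncard ∨ Nf ES n i = anc ES i := by
  intro n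
  induction n with
  | zero =>
    left
    have : Nf ES 0 i = {i} := by
      ext r; simp [Nf, W, Set.mem_singleton_iff]
    rw [this, Set.ncard_singleton]
  | succ n ih =>
    rcases ih with h | h
    · by_cases heq : Nf ES n i = Nf ES (n+1) i
      · right
        have hstab := Nf_stable heq
        have hanc : anc ES i ⊆ Nf ES n i := by
          intro r hr
          obtain ⟨m, hm⟩ := rtg_W hr
          have h1 : r ∈ Nf ES m i := hm
          have h2 : Nf ES m i ⊆ Nf ES (max m n) i :=
            Nf_mono hself (le_max_left _ _) i
          rw [hstab (max m n) (le_max_right _ _)] at h2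
          exact heq ▸ h2 h1
        exact subset_antisymm (Nf_subset_anc _ _) (heq ▸ hanc)
      · left
        have hss : Nf ES n i ⊂ Nf ES (n+1) i :=
          ⟨Nf_mono hself (Nat.le_succ n) i, fun hsub =>
            heq (subset_antisymm (Nf_mono hself (Nat.le_succ n) i) hsub)⟩
        have := Set.ncard_lt_ncard hss (Set.toFinite _)
        omega
    · right
      refine subset_antisymm (Nf_subset_anc _ _) ?_
      rw [← h]; exact Nf_mono hself (Nat.le_succ n) i

lemma Nf_eq_anc (hself : ∀ v : V, (v, v) ∈ ES) (i : V) {n : ℕ}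
    (hn : Fintype.card V ≤ n) : Nf ES n i = anc ES i := by
  rcases Nf_card_or hself i n with h | h
  · exfalso
    have h2 : (Nf ES n i).ncard ≤ Fintype.card V := by
      have := Set.ncard_le_ncard (Set.subset_univ (Nf ES n i)) (Set.toFinite _)
      rwa [Set.ncard_univ, Nat.card_eq_fintype_card] at this
    omega
  · exact h

end Fin

lemma anc_eq (hsym : ∀ i j : V, ReflTransGen (fun a b => (a, b) ∈ ES) i j →
      ReflTransGen (fun a b => (a, b) ∈ ES) j i)
    {i j : V} (hij : (i, j) ∈ ES) : anc ES i = anc ES j := by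
  ext r
  constructor
  · exact fun hr => ReflTransGen.tail hr hij
  · intro hr
    have hji : ReflTransGen (fun a b => (a, b) ∈ ES) j r := hsym _ _ hr
    have hir : ReflTransGen (fun a b => (a, b) ∈ ES) i r :=
      (ReflTransGen.single hij).trans hji
    exact hsym _ _ hir

lemma rtg_unrolled {T : ℕ} {q a : V × ℕ}
    (h : ReflTransGen (unrolled ES T) q a) :
    q = a ∨ (1 ≤ q.2 ∧ q.2 < a.2 ∧ a.2 ≤ T ∧ W ES (a.2 - q.2) q.1 a.1) := by
  induction h with
  | refl => left; rfl
  | @tail b a hqb hba ih =>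
    obtain ⟨h1, h2, h3, h4⟩ := hba
    rcases ih with rfl | ⟨i1, i2, i3, i4⟩
    · right
      refine ⟨h3, by omega, h4, ?_⟩
      have he : a.2 - q.2 = 1 := by omega
      rw [he]; exact ⟨a.1, h1, rfl⟩
    · right
      refine ⟨i1, by omega, h4, ?_⟩
      have he : a.2 - q.2 = (b.2 - q.2) + 1 := by omega
      rw [he]; exact W_snoc i4 h1

lemma unrolled_rtg {T : ℕ} {v : V} :
    ∀ {n : ℕ} {r : V} {s : ℕ}, W ES n r v → 1 ≤ s → s + n ≤ T →
      ReflTransGen (unrolled ES T) (r, s) (v, s + n) := by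
  intro n
  induction n with
  | zero =>
    intro r s h h1 h2
    obtain rfl : r = v := h; exact ReflTransGen.refl
  | succ n ih =>
    intro r s h h1 h2
    obtain ⟨c, hc, hw⟩ := h
    have hedge : unrolled ES T (r, s) (c, s+1) := ⟨hc, rfl, h1, by omega⟩
    have hrest := ih (s := s + 1) hw (by omega) (by omega)
    have h3 : s + 1 + n = s + (n+1) := by omega
    exact ReflTransGen.head hedge (h3 ▸ hrest)

lemma mem_rootsSet_unrolled (hself : ∀ v : V, (v, v) ∈ ES)
    {T t : ℕ} (ht1 : 1 ≤ t) (ht2 : t ≤ T) (v : V) (x : V × ℕ) :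
    x ∈ rootsSet (unrolled ES T) (v, t) ↔ x.2 = 1 ∧ W ES (t - 1) x.1 v := by
  have hroot1 : ∀ y : V × ℕ, y.2 = 1 →
      {q | ReflTransGen (unrolled ES T) q y} = {y} := by
    intro y hy
    ext q
    simp only [Set.mem_setOf_eq, Set.mem_singleton_iff]
    constructor
    · intro hq
      rcases rtg_unrolled hq with h | ⟨h1, h2, _, _⟩
      · exact h
      · omega
    · rintro rfl; exact ReflTransGen.refl
  constructor
  · rintro ⟨hreach, hroot⟩
    have hx2 : x.2 = 1 := by
      by_contra hx2
      have hb : 1 ≤ x.2 ∧ x.2 ≤ T := by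
        rcases rtg_unrolled hreach with h | ⟨h1, h2, h3, _⟩
        · rw [h]; exact ⟨ht1, ht2⟩
        · exact ⟨h1, by omega⟩
      have hedge : unrolled ES T (x.1, x.2 - 1) x := by
        exact ⟨hself x.1, by omega, by omega, hb.2⟩
      have hmem : (x.1, x.2 - 1) ∈ {q | ReflTransGen (unrolled ES T) q x} :=
        ReflTransGen.single hedge
      rw [hroot] at hmem
      have := congrArg Prod.snd hmem
      simp only at this
      omega
    refine ⟨hx2, ?_⟩
    rcases rtg_unrolled hreach with h | ⟨_, h2, _, h4⟩
    · have hx1 : x.1 = v := by rw [h]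
      have ht : t = 1 := by
        have := congrArg Prod.snd h; simp only at this; omega
      rw [ht, hx1]; rfl
    · have he : t - 1 = t - x.2 := by omega
      rw [he]; exact h4
  · rintro ⟨hx2, hw⟩
    constructor
    · have := unrolled_rtg (T := T) hw (le_refl 1) (by omega)
      have he : 1 + (t - 1) = t := by omega
      rw [he] at this
      have hx : x = (x.1, 1) := by
        ext <;> simp [hx2]
      rw [hx]; exact this
    · exact hroot1 x hx2

end BadEdgesAux

open BadEdgesAux in
/-- If every weakly connected component of the summary graph (with all
self-loops) is strongly connected, then at most `p·|E_S|` edges of the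
`T`-step unrolled DAG have endpoints with different root sets, and the
fraction of such edges among all `(T-1)·|E_S|` edges tends to `0`. -/
theorem badEdges_bound {V : Type*} [Fintype V] [DecidableEq V]
    (ES : Finset (V × V)) (hself : ∀ v : V, (v, v) ∈ ES)
    (hsym : ∀ i j : V, ReflTransGen (fun a b => (a, b) ∈ ES) i j →
      ReflTransGen (fun a b => (a, b) ∈ ES) j i) :
    (∀ T : ℕ, (badEdges ES T).ncard ≤ Fintype.card V * ES.card) ∧
      Tendsto (fun T : ℕ =>
          ((badEdges ES T).ncard : ℝ) / (((T : ℝ) - 1) * ES.card))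
        atTop (nhds 0) := by
  set p := Fintype.card V with hp
  have hsub : ∀ T : ℕ, badEdges ES T ⊆ ↑(ES ×ˢ Finset.Icc 1 p) := by
    intro T x hx
    obtain ⟨hxE, hxt1, hxt2, hxne⟩ := hx
    simp only [Finset.coe_product, Set.mem_prod, Finset.mem_coe,
      Finset.coe_Icc, Set.mem_Icc]
    refine ⟨hxE, hxt1, ?_⟩
    by_contra hgt
    push_neg at hgt
    set t := x.2 with htdef
    have htT : t ≤ T ∧ t + 1 ≤ T := by omega
    apply hxne
    ext y
    rw [mem_rootsSet_unrolled hself hxt1 htT.1,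
      mem_rootsSet_unrolled hself (by omega) htT.2]
    have h1 : Nf ES (t - 1) x.1.1 = anc ES x.1.1 :=
      Nf_eq_anc hself _ (by omega)
    have h2 : Nf ES ((t + 1) - 1) x.1.2 = anc ES x.1.2 :=
      Nf_eq_anc hself _ (by omega)
    have h3 : anc ES x.1.1 = anc ES x.1.2 := anc_eq hsym hxE
    constructor
    · rintro ⟨hy1, hyW⟩
      refine ⟨hy1, ?_⟩
      have : y.1 ∈ Nf ES (t - 1) x.1.1 := hyW
      rw [h1, h3, ← h2] at this
      exact this
    · rintro ⟨hy1, hyW⟩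
      refine ⟨hy1, ?_⟩
      have : y.1 ∈ Nf ES ((t + 1) - 1) x.1.2 := hyW
      rw [h2, ← h3, ← h1] at this
      exact this
  have hbound : ∀ T : ℕ, (badEdges ES T).ncard ≤ p * ES.card := by
    intro T
    have := Set.ncard_le_ncard (hsub T) (Set.toFinite _)
    rwa [Set.ncard_coe_finset, Finset.card_product, Nat.card_Icc,
      Nat.add_sub_cancel, mul_comm] at this
  refine ⟨hbound, ?_⟩
  by_cases hE : ES = ∅
  · have hzero : ∀ T : ℕ, badEdges ES T = ∅ := by
      intro T
      ext x
      simp [badEdges, hE]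
    simp only [hzero, Set.ncard_empty, Nat.cast_zero, zero_div]
    exact tendsto_const_nhds
  · have hEpos : 0 < (ES.card : ℝ) := by
      have : 0 < ES.card := Finset.card_pos.mpr (Finset.nonempty_iff_ne_empty.mpr hE)
      exact_mod_cast this
    have hdenom : Tendsto (fun T : ℕ => ((T : ℝ) - 1) * ES.card) atTop atTop := by
      apply Tendsto.atTop_mul_const hEpos
      exact tendsto_atTop_add_const_right atTop (-1) tendsto_natCast_atTop_atTop
    have hg : Tendsto (fun T : ℕ => ((p * ES.card : ℕ) : ℝ) / (((T : ℝ) - 1) * ES.card))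
        atTop (nhds 0) := Tendsto.div_atTop tendsto_const_nhds hdenom
    apply squeeze_zero' ?_ ?_ hg
    · filter_upwards [eventually_ge_atTop 2] with T hT
      have hd : 0 < ((T : ℝ) - 1) * ES.card := by
        apply mul_pos _ hEpos
        have : (2 : ℝ) ≤ (T : ℝ) := by exact_mod_cast hT
        linarith
      positivity
    · filter_upwards [eventually_ge_atTop 2] with T hT
      have hd : 0 < ((T : ℝ) - 1) * ES.card := by
        apply mul_pos _ hEpos
        have : (2 : ℝ) ≤ (T : ℝ) := by exact_mod_cast hT
        linarith
      have hnum : ((badEdges ES T).ncard : ℝ) ≤ ((p * ES.card : ℕ) : ℝ) := by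
        exact_mod_cast hbound T
      exact (div_le_div_iff_of_pos_right hd).mpr hnum
end
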